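/- Let ψ : ℝ⁵ → ℝ⁵ be the map from coordinates (x,y,z,p,q) to coordinates (a₁,a₂,a₃,a₄,a₅) given by ψ(x,y,z,p,q) = (2z + 2q²x − 4pq, 2y, 2p − qx, 2q, −x). Then the pullbacks of the flat Cartan 1-forms θ₁, θ₂, θ₃ under ψ satisfy, at every point of ℝ⁵: ψ*θ₁ = 2(dz − q²dx) − 4q(dp − qdx), ψ*θ₂ = 2(dy − pdx), ψ*θ₃ = 2(dp − qdx). In particular, ψ*θ₁, ψ*θ₂, ψ*θ₃ lie in the pointwise span of the 1-forms dy − pdx, dp − qdx, dz − q²dx annihilating the Hilbert–Cartan distribution, so ψ maps the Hilbert–Cartan distribution to the flat Cartan distribution. -/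
import Mathlib


noncomputable section

/-- The `i`-th coordinate 1-form on ℝ⁵. -/
def co (i : Fin 5) : (Fin 5 → ℝ) →L[ℝ] ℝ := ContinuousLinearMap.proj i

/-- Flat Cartan 1-form `θ₁ = da₁ + (a₃ + (1/2)a₄a₅)da₄`. -/
def θ₁ (a : Fin 5 → ℝ) : (Fin 5 → ℝ) →L[ℝ] ℝ :=
  co 0 + (a 2 + (1 / 2) * a 3 * a 4) • co 3

/-- Flat Cartan 1-form `θ₂ = da₂ + (a₃ − (1/2)a₄a₅)da₅`. -/
def θ₂ (a : Fin 5 → ℝ) : (Fin 5 → ℝ) →L[ℝ] ℝ :=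
  co 1 + (a 2 - (1 / 2) * a 3 * a 4) • co 4

/-- Flat Cartan 1-form `θ₃ = da₃ + (1/2)a₄da₅ − (1/2)a₅da₄`. -/
def θ₃ (a : Fin 5 → ℝ) : (Fin 5 → ℝ) →L[ℝ] ℝ :=
  co 2 + ((1 / 2) * a 3) • co 4 - ((1 / 2) * a 4) • co 3

/-- Coordinates `(x,y,z,p,q)`: `ω₁ = dy − p dx`. -/
def ω₁ (u : Fin 5 → ℝ) : (Fin 5 → ℝ) →L[ℝ] ℝ := co 1 - u 3 • co 0

/-- `ω₂ = dp − q dx`. -/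
def ω₂ (u : Fin 5 → ℝ) : (Fin 5 → ℝ) →L[ℝ] ℝ := co 3 - u 4 • co 0

/-- `ω₃ = dz − q² dx` (Hilbert–Cartan). -/
def ω₃ (u : Fin 5 → ℝ) : (Fin 5 → ℝ) →L[ℝ] ℝ := co 2 - ((u 4) ^ 2) • co 0

/-- `ψ(x,y,z,p,q) = (2z + 2q²x − 4pq, 2y, 2p − qx, 2q, −x)`. -/
def ψmap : (Fin 5 → ℝ) → (Fin 5 → ℝ) :=
  fun u => ![2 * u 2 + 2 * (u 4) ^ 2 * u 0 - 4 * u 3 * u 4,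
             2 * u 1, 2 * u 3 - u 4 * u 0, 2 * u 4, -u 0]


/-- Explicit derivative of `ψmap`. -/
def Dψ (u : Fin 5 → ℝ) : (Fin 5 → ℝ) →L[ℝ] (Fin 5 → ℝ) :=
  ContinuousLinearMap.pi
    ![(2 : ℝ) • co 2 + (2 * (u 4) ^ 2) • co 0 + (4 * u 4 * u 0 - 4 * u 3) • co 4
        - (4 * u 4) • co 3,
      (2 : ℝ) • co 1,
      (2 : ℝ) • co 3 - u 0 • co 4 - u 4 • co 0,
      (2 : ℝ) • co 4,
      -co 0]

lemma hasFDeriv_proj (u : Fin 5 → ℝ) (k : Fin 5) :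
    HasFDerivAt (fun x : Fin 5 → ℝ => x k) (co k) u :=
  (co k).hasFDerivAt

lemma hasFDeriv_ψmap (u : Fin 5 → ℝ) : HasFDerivAt ψmap (Dψ u) u := by
  rw [hasFDerivAt_pi']
  intro i
  have h := hasFDeriv_proj u
  fin_cases i
  · convert (((h 2).const_mul 2).add
        ((((h 4).mul (h 4)).const_mul 2).mul (h 0))).sub
        (((h 3).const_mul 4).mul (h 4)) using 1
    all_goals
      ext x
      simp [ψmap, Dψ, co, Fin.isValue]
      try ring
      try tauto
  · convert (h 1).const_mul 2 using 1
    all_goals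
      ext x
      simp [ψmap, Dψ, co, Fin.isValue]
      try ring
      try tauto
  · convert ((h 3).const_mul 2).sub ((h 4).mul (h 0)) using 1
    all_goals
      ext x
      simp [ψmap, Dψ, co, Fin.isValue]
      try ring
      try tauto
  · convert (h 4).const_mul 2 using 1
    all_goals
      ext x
      simp [ψmap, Dψ, co, Fin.isValue]
      try ring
      try tauto
  · convert (h 0).neg using 1
    all_goals
      ext x
      simp [ψmap, Dψ, co, Fin.isValue]
      try ring
      try tauto

lemma fderiv_ψmap (u : Fin 5 → ℝ) : fderiv ℝ ψmap u = Dψ u :=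
  (hasFDeriv_ψmap u).fderiv

lemma pull1 (u : Fin 5 → ℝ) :
    (θ₁ (ψmap u)).comp (fderiv ℝ ψmap u) = (2 : ℝ) • ω₃ u - (4 * u 4) • ω₂ u := by
  rw [fderiv_ψmap]
  ext v
  simp [θ₁, ω₂, ω₃, Dψ, ψmap, co, Fin.isValue]
  ring

lemma pull2 (u : Fin 5 → ℝ) :
    (θ₂ (ψmap u)).comp (fderiv ℝ ψmap u) = (2 : ℝ) • ω₁ u := by
  rw [fderiv_ψmap]
  ext v
  simp [θ₂, ω₁, Dψ, ψmap, co, Fin.isValue]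
  ring

lemma pull3 (u : Fin 5 → ℝ) :
    (θ₃ (ψmap u)).comp (fderiv ℝ ψmap u) = (2 : ℝ) • ω₂ u := by
  rw [fderiv_ψmap]
  ext v
  simp [θ₃, ω₂, Dψ, ψmap, co, Fin.isValue]
  ring

/-- `ψ*θ₁ = 2(dz − q²dx) − 4q(dp − qdx)`, `ψ*θ₂ = 2(dy − pdx)`,
`ψ*θ₃ = 2(dp − qdx)`; in particular the pullbacks lie in the pointwise span of
`{dy − pdx, dp − qdx, dz − q²dx}`, so `ψ` maps the Hilbert–Cartan distribution to the
flat Cartan distribution. -/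
theorem hilbert_cartan_to_flat_cartan :
    (∀ u : Fin 5 → ℝ,
        (θ₁ (ψmap u)).comp (fderiv ℝ ψmap u) = (2 : ℝ) • ω₃ u - (4 * u 4) • ω₂ u) ∧
    (∀ u : Fin 5 → ℝ,
        (θ₂ (ψmap u)).comp (fderiv ℝ ψmap u) = (2 : ℝ) • ω₁ u) ∧
    (∀ u : Fin 5 → ℝ,
        (θ₃ (ψmap u)).comp (fderiv ℝ ψmap u) = (2 : ℝ) • ω₂ u) ∧
    (∀ u : Fin 5 → ℝ,
        (θ₁ (ψmap u)).comp (fderiv ℝ ψmap u) ∈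
          Submodule.span ℝ ({ω₁ u, ω₂ u, ω₃ u} : Set ((Fin 5 → ℝ) →L[ℝ] ℝ)) ∧
        (θ₂ (ψmap u)).comp (fderiv ℝ ψmap u) ∈
          Submodule.span ℝ ({ω₁ u, ω₂ u, ω₃ u} : Set ((Fin 5 → ℝ) →L[ℝ] ℝ)) ∧
        (θ₃ (ψmap u)).comp (fderiv ℝ ψmap u) ∈
          Submodule.span ℝ ({ω₁ u, ω₂ u, ω₃ u} : Set ((Fin 5 → ℝ) →L[ℝ] ℝ))) := by
  refine ⟨pull1, pull2, pull3, fun u => ?_⟩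
  have m1 : ω₁ u ∈ Submodule.span ℝ ({ω₁ u, ω₂ u, ω₃ u} : Set ((Fin 5 → ℝ) →L[ℝ] ℝ)) :=
    Submodule.subset_span (by simp)
  have m2 : ω₂ u ∈ Submodule.span ℝ ({ω₁ u, ω₂ u, ω₃ u} : Set ((Fin 5 → ℝ) →L[ℝ] ℝ)) :=
    Submodule.subset_span (by simp)
  have m3 : ω₃ u ∈ Submodule.span ℝ ({ω₁ u, ω₂ u, ω₃ u} : Set ((Fin 5 → ℝ) →L[ℝ] ℝ)) :=
    Submodule.subset_span (by simp)
  refine ⟨?_, ?_, ?_⟩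
  · rw [pull1]
    exact Submodule.sub_mem _ (Submodule.smul_mem _ _ m3) (Submodule.smul_mem _ _ m2)
  · rw [pull2]; exact Submodule.smul_mem _ _ m1
  · rw [pull3]; exact Submodule.smul_mem _ _ m2


end
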